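/- Fix λ ∈ (0,1)^d with complements λ°_i = (1−λ_i)/s (s = d−1) and parameters η > 1, α = 1/η, t > 0, δ = (η t^{1/η}/s)(1 − 1/η). Then the function f(λ') = −∑_i λ°_i log((1−λ'_i)/t) + ∑_i λ°_i log λ°_i + (δ/(α−1))(1 − ∑_i ((1−λ'_i)/t)^α) has a critical point (∂f/∂λ'_i = 0) at λ'_i = 1 − t (η/(δ s))^η (1 − 1/η)^η (1 − λ_i)^η, which with the given δ simplifies to λ'_i = 1 − (1−λ_i)^η. -/

import Mathlib

open Real Finset

/-!
Only the `i`-th summands of `f` depend on `λ'_i`, so `∂f/∂λ'_i` at `λ'_i = u` is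
`λ°_i / (1 - u) - δ/(1 - α) · (α/t) · ((1 - u)/t)^(α - 1)`. With `α = 1/η` and the given `δ`,
`δ/(1 - α) = η t^α / s`, and both terms equal `x^(1-η)/s` at `1 - u = x^η`, `x = 1 - λ_i`.
The same choice of `δ` makes the prefactor `t (η/(δ s))^η (1 - 1/η)^η` equal to `1`.
-/

theorem HasDerivAt.sum_update {𝕜 F ι : Type*} [NontriviallyNormedField 𝕜]
    [NormedAddCommGroup F] [NormedSpace 𝕜 F] [Fintype ι] [DecidableEq ι]
    {g : ι → 𝕜 → F} {x : ι → 𝕜} {i : ι} {g' : F} (h : HasDerivAt (g i) g' (x i)) :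
    HasDerivAt (fun u => ∑ j, g j (Function.update x i u j)) g' (x i) := by
  have hsplit : (fun u => ∑ j, g j (Function.update x i u j))
      = fun u => g i u + ∑ j ∈ univ.erase i, g j (x j) := by
    funext u
    rw [← add_sum_erase _ _ (mem_univ i), Function.update_self]
    congr 1
    refine sum_congr rfl fun j hj => ?_
    rw [Function.update_of_ne (ne_of_mem_erase hj)]
  rw [hsplit]
  exact h.add_const _

theorem hasDerivAt_log_one_sub_div {t u : ℝ} (ht : 0 < t) (hu : u < 1) :
    HasDerivAt (fun v => log ((1 - v) / t)) (-(1 - u)⁻¹) u := by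
  have hlin : HasDerivAt (fun v : ℝ => (1 - v) / t) (-1 / t) u :=
    ((hasDerivAt_id u).const_sub 1).div_const t
  convert hlin.log (div_pos (sub_pos.2 hu) ht).ne' using 1
  field_simp [(sub_pos.2 hu).ne']

theorem hasDerivAt_one_sub_div_rpow {t u : ℝ} (α : ℝ) (ht : 0 < t) (hu : u < 1) :
    HasDerivAt (fun v => ((1 - v) / t) ^ α) (-(α / t) * ((1 - u) / t) ^ (α - 1)) u := by
  have hlin : HasDerivAt (fun v : ℝ => (1 - v) / t) (-1 / t) u :=
    ((hasDerivAt_id u).const_sub 1).div_const t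
  convert hlin.rpow_const (Or.inl (div_pos (sub_pos.2 hu) ht).ne') using 1
  ring

theorem mul_div_rpow_mul_rpow_eq_one {η t b : ℝ} (hη : η ≠ 0) (ht : 0 < t) (hb : 0 < b) :
    t * (η / (η * t ^ (1 / η) * b)) ^ η * b ^ η = 1 := by
  have hroot : (t ^ (1 / η)) ^ η = t := by
    rw [← rpow_mul ht.le, one_div_mul_cancel hη, rpow_one]
  rw [mul_assoc η, div_mul_cancel_left₀ hη, inv_rpow (by positivity),
    mul_rpow (by positivity) hb.le, hroot]
  field_simp

theorem rpow_one_div_div_mul_rpow_div_rpow {η t x : ℝ} (hη : η ≠ 0) (ht : 0 < t) (hx : 0 < x) :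
    t ^ (1 / η) / t * (x ^ η / t) ^ (1 / η - 1) = x / x ^ η := by
  have hexp : η * (1 / η - 1) = 1 - η := by field_simp
  rw [div_rpow (by positivity) ht.le, ← rpow_mul hx.le, hexp, rpow_sub hx, rpow_one,
    rpow_sub ht, rpow_one]
  field_simp

theorem neg_log_grad_add_tsallis_grad_eq_zero {η t x : ℝ} (s : ℝ) (hη0 : η ≠ 0) (hη1 : η ≠ 1)
    (ht : 0 < t) (hx : 0 < x) :
    -(x / s * -(x ^ η)⁻¹) + η * t ^ (1 / η) / s * (1 - 1 / η) / (1 / η - 1) *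
      -(-(1 / η / t) * (x ^ η / t) ^ (1 / η - 1)) = 0 := by
  have hB : 1 - 1 / η ≠ 0 := by rwa [sub_ne_zero, ne_comm, one_div, inv_ne_one]
  have hδ : η * t ^ (1 / η) / s * (1 - 1 / η) / (1 / η - 1) = -(η * t ^ (1 / η) / s) := by
    rw [show 1 / η - 1 = -(1 - 1 / η) by ring, div_neg, mul_div_cancel_right₀ _ hB]
  rw [hδ]
  linear_combination (-1 / s) * rpow_one_div_div_mul_rpow_div_rpow hη0 ht hx
    - (t ^ (1 / η) / t * (x ^ η / t) ^ (1 / η - 1) / s) * mul_inv_cancel₀ hη0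

theorem tso_shrinkage_critical_point {d : ℕ} (hd : 2 ≤ d)
    (lam : Fin d → ℝ) (hlam : ∀ i, lam i ∈ Set.Ioo (0:ℝ) 1)
    (η : ℝ) (hη : 1 < η) (t : ℝ) (ht : 0 < t) :
    let s : ℝ := (d : ℝ) - 1
    let α : ℝ := 1 / η
    let δ : ℝ := (η * t ^ (1 / η) / s) * (1 - 1 / η)
    let lamc : Fin d → ℝ := fun i => (1 - lam i) / s
    let f : (Fin d → ℝ) → ℝ := fun l' =>
      (-(∑ i, lamc i * Real.log ((1 - l' i) / t)))
        + (∑ i, lamc i * Real.log (lamc i))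
        + (δ / (α - 1)) * (1 - ∑ i, ((1 - l' i) / t) ^ α)
    let critical : Fin d → ℝ := fun i =>
      1 - t * (η / (δ * s)) ^ η * (1 - 1 / η) ^ η * (1 - lam i) ^ η
    (∀ i, critical i = 1 - (1 - lam i) ^ η) ∧
      ∀ i, HasDerivAt (fun u => f (Function.update critical i u)) 0 (critical i) := by
  intro s α δ lamc f critical
  have hs : 0 < s := by
    have : (2 : ℝ) ≤ d := by exact_mod_cast hd
    simp only [s]; linarith
  have hB : 0 < 1 - 1 / η := sub_pos.2 ((div_lt_one (by positivity)).2 hη)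
  have hcrit : ∀ i, critical i = 1 - (1 - lam i) ^ η := fun i => by
    have hδs : δ * s = η * t ^ (1 / η) * (1 - 1 / η) := by simp only [δ]; field_simp
    simp only [critical, hδs, mul_div_rpow_mul_rpow_eq_one (by positivity) ht hB, one_mul]
  refine ⟨hcrit, fun i => ?_⟩
  have hx : 0 < 1 - lam i := sub_pos.2 (hlam i).2
  have hgap : 1 - critical i = (1 - lam i) ^ η := by rw [hcrit i]; ring
  have hu : critical i < 1 := by linarith [rpow_pos_of_pos hx η]
  have hderiv := ((((hasDerivAt_log_one_sub_div ht hu).const_mul (lamc i)).sum_update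
      (g := fun j v => lamc j * log ((1 - v) / t))).neg.add_const
      (∑ j, lamc j * log (lamc j))).add
    ((((hasDerivAt_one_sub_div_rpow α ht hu).sum_update
      (g := fun _ v => ((1 - v) / t) ^ α)).const_sub 1).const_mul (δ / (α - 1)))
  refine hderiv.congr_deriv ?_
  rw [hgap]
  exact neg_log_grad_add_tsallis_grad_eq_zero s (by positivity) hη.ne' ht hx
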